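/- arXiv:2012.01011 — 3 statements merged into one kernel-verified Lean document; each statement's English description precedes it below -/
import Mathlib

section
/- There exist a FAM mechanism ψ, a preference profile P, and a Nash equilibrium P' of ψ at P such that ψ(P') assigns strictly more students than every stable matching of P. Concretely: students {i,j,k,h}, schools {a,b,c} of capacity 1, preferences P_i: a,b,∅; P_j: c,a,∅; P_k: c,a,∅; P_h: c,∅; priorities ≻_a: k,i,j,h; ≻_b: k,h,j,i; ≻_c: k,h,i,j. Truth-telling is an equilibrium of a suitable FAM mechanism with outcome assigning 3 students (i→b, j→a, k→c), while the deferred acceptance matching assigns only 2 students (i→a, k→c). -/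
open Finset
open scoped Classical

/-- A matching assigns each student a school or `none` (unassigned). -/
abbrev Matching (I S : Type*) := I → Option S

/-- An individual strict preference over `S ∪ {∅}`: an injective utility
function on `Option S` (higher value = more preferred, `none` = being
unassigned). -/
abbrev IndPref (S : Type*) := {f : Option S → ℕ // Function.Injective f}

/-- A preference profile: one strict preference per student. -/
abbrev Prof (I S : Type*) := I → IndPref S

/-- Strict school priorities: for each school, an injective rank over
students (higher value = higher priority). -/
abbrev Prio (I S : Type*) := {p : S → I → ℕ // ∀ s, Function.Injective (p s)}

/-- A mechanism maps reported preference profiles to matchings. -/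
abbrev Mechanism (I S : Type*) := Prof I S → Matching I S

variable {I S : Type*} [Fintype I] [DecidableEq I] [Fintype S] [DecidableEq S]

/-- Capacity feasibility. -/
def Feasible (q : S → ℕ) (μ : Matching I S) : Prop :=
  ∀ s : S, (univ.filter fun i => μ i = some s).card ≤ q s

/-- Individual rationality with respect to profile `P`. -/
def IndivRational (P : Prof I S) (μ : Matching I S) : Prop :=
  ∀ i, (P i).1 none ≤ (P i).1 (μ i)

/-- Number of assigned students. -/
def msize (μ : Matching I S) : ℕ := (univ.filter fun i => μ i ≠ none).card

/-- Maximality: no feasible individually rational matching assigns strictly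
more students. -/
def MaximalMatching (P : Prof I S) (q : S → ℕ) (μ : Matching I S) : Prop :=
  ∀ μ' : Matching I S, Feasible q μ' → IndivRational P μ' → msize μ' ≤ msize μ

/-- `μ'` Pareto dominates `μ`. -/
def Dominates (P : Prof I S) (μ' μ : Matching I S) : Prop :=
  (∀ i, (P i).1 (μ i) ≤ (P i).1 (μ' i)) ∧ ∃ j, (P j).1 (μ j) < (P j).1 (μ' j)

/-- Pareto efficiency among feasible individually rational matchings. -/
def Efficient (P : Prof I S) (q : S → ℕ) (μ : Matching I S) : Prop :=
  ¬ ∃ μ', Feasible q μ' ∧ IndivRational P μ' ∧ Dominates P μ' μ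

/-- Non-wastefulness. -/
def NonWasteful (P : Prof I S) (q : S → ℕ) (μ : Matching I S) : Prop :=
  ∀ i s, (P i).1 (μ i) < (P i).1 (some s) →
    (univ.filter fun j => μ j = some s).card = q s

/-- Fairness (no justified envy). -/
def Fair (P : Prof I S) (pr : Prio I S) (μ : Matching I S) : Prop :=
  ¬ ∃ i s j, (P i).1 (μ i) < (P i).1 (some s) ∧ μ j = some s ∧ pr.1 s j < pr.1 s i

/-- Stability: individually rational, non-wasteful and fair. -/
def Stable (P : Prof I S) (pr : Prio I S) (q : S → ℕ) (μ : Matching I S) : Prop :=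
  Feasible q μ ∧ IndivRational P μ ∧ NonWasteful P q μ ∧ Fair P pr μ

/-- Fairness for unassigned students. -/
def FairForUnassigned (P : Prof I S) (pr : Prio I S) (μ : Matching I S) : Prop :=
  ¬ ∃ i s j, μ i = none ∧ (P i).1 none < (P i).1 (some s) ∧ μ j = some s ∧
    pr.1 s j < pr.1 s i

/-- `(a, t)` is an improving chain for `μ`: each student `a k` strictly
prefers `t k` to their assignment, each school `t k` (for `k < n`) is
currently occupied by the next student `a (k+1)`, and the last school has
excess capacity. -/
def IsImpChain (P : Prof I S) (q : S → ℕ) (μ : Matching I S)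
    (n : ℕ) (a : Fin (n + 1) → I) (t : Fin (n + 1) → S) : Prop :=
  Function.Injective a ∧
  (∀ k, (P (a k)).1 (μ (a k)) < (P (a k)).1 (some (t k))) ∧
  (∀ k : Fin n, μ (a k.succ) = some (t k.castSucc)) ∧
  (univ.filter fun j => μ j = some (t (Fin.last n))).card < q (t (Fin.last n))

/-- `(a, t)` is an improving cycle for `μ`: each student `a k` is assigned
to `t k` and strictly prefers the school `t (k+1)` vacated by the next
student in the cycle. -/
def IsImpCycle (P : Prof I S) (μ : Matching I S)
    (n : ℕ) (a : Fin (n + 1) → I) (t : Fin (n + 1) → S) : Prop :=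
  Function.Injective a ∧
  (∀ k, μ (a k) = some (t k)) ∧
  (∀ k, (P (a k)).1 (some (t k)) < (P (a k)).1 (some (t (k + 1))))

def HasImpChain (P : Prof I S) (q : S → ℕ) (μ : Matching I S) : Prop :=
  ∃ n a t, IsImpChain P q μ n a t

def HasImpCycle (P : Prof I S) (μ : Matching I S) : Prop :=
  ∃ n a t, IsImpCycle P μ n a t

/-- Implementing one improving chain or cycle: every student involved moves
to the school they prefer in the chain/cycle, all others keep their
assignment. -/
def ImplementStep (P : Prof I S) (q : S → ℕ) (μ μ' : Matching I S) : Prop :=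
  (∃ n a t, IsImpChain P q μ n a t ∧ (∀ k, μ' (a k) = some (t k)) ∧
    ∀ j, (∀ k, j ≠ a k) → μ' j = μ j) ∨
  (∃ n a t, IsImpCycle P μ n a t ∧ (∀ k, μ' (a k) = some (t (k + 1))) ∧
    ∀ j, (∀ k, j ≠ a k) → μ' j = μ j)

/-- One refinement step of the first stage of EAM: keep only the matchings
assigning student `i`, whenever such matchings exist. -/
noncomputable def xiStep (A : Set (Matching I S)) (i : I) : Set (Matching I S) :=
  if ∃ μ ∈ A, μ i ≠ none then {μ ∈ A | μ i ≠ none} else A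

/-- The set `ξ^n` of the first stage of EAM, for the enumeration `L` of the
students, starting from all feasible individually rational matchings. -/
noncomputable def xiList (P : Prof I S) (q : S → ℕ) (L : List I) :
    Set (Matching I S) :=
  L.foldl xiStep {μ | Feasible q μ ∧ IndivRational P μ}

/-- `μ` is a possible outcome of an EAM procedure with student enumeration
`L`: it is reachable from some matching selected in the first stage by
implementing improving chains/cycles, and admits no further improving chain
or cycle. -/
def IsEAMOutcome (P : Prof I S) (q : S → ℕ) (L : List I) (μ : Matching I S) :
    Prop :=
  ∃ μ₀ ∈ xiList P q L, Relation.ReflTransGen (ImplementStep P q) μ₀ μ ∧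
    ¬ HasImpChain P q μ ∧ ¬ HasImpCycle P μ

/-- EAM mechanisms with enumeration `L`. -/
def IsEAMMech (q : S → ℕ) (L : List I) (ψ : Mechanism I S) : Prop :=
  ∀ P, IsEAMOutcome P q L (ψ P)

/-- One sub-step of Step 2 of FAM: a pair `(i, s)` violating fairness for
unassigned students is resolved by placing `i` at `s` and unassigning the
lowest-priority student currently matched to `s`. -/
def FairStep (P : Prof I S) (pr : Prio I S) (μ μ' : Matching I S) : Prop :=
  ∃ i s j, μ i = none ∧ (P i).1 none < (P i).1 (some s) ∧ μ j = some s ∧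
    pr.1 s j < pr.1 s i ∧ (∀ j', μ j' = some s → pr.1 s j ≤ pr.1 s j') ∧
    μ' = Function.update (Function.update μ j none) i (some s)

/-- FAM mechanisms: an EAM first stage followed by iterated resolution of
violations of fairness for unassigned students. -/
def IsFAMMech (q : S → ℕ) (pr : Prio I S) (L : List I) (ψ : Mechanism I S) :
    Prop :=
  ∀ P, ∃ μ₁, IsEAMOutcome P q L μ₁ ∧
    Relation.ReflTransGen (FairStep P pr) μ₁ (ψ P) ∧
    FairForUnassigned P pr (ψ P)

/-- Individually rational mechanism (with respect to reports). -/
def IRMech (q : S → ℕ) (ψ : Mechanism I S) : Prop :=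
  ∀ P, Feasible q (ψ P) ∧ IndivRational P (ψ P)

/-- MaximalMatching mechanism. -/
def MaximalMech (q : S → ℕ) (ψ : Mechanism I S) : Prop :=
  IRMech q ψ ∧ ∀ P, MaximalMatching P q (ψ P)

/-- Nash equilibrium of the preference-reporting game induced by `ψ`, with
true preferences `u`. -/
def NashEq (u : Prof I S) (ψ : Mechanism I S) (P' : Prof I S) : Prop :=
  ∀ (i : I) (Pi'' : IndPref S),
    (u i).1 (ψ (Function.update P' i Pi'') i) ≤ (u i).1 (ψ P' i)

/-- Strategy-proofness. -/
def StrategyProof (ψ : Mechanism I S) : Prop :=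
  ∀ (P : Prof I S) (i : I) (Pi' : IndPref S),
    (P i).1 (ψ (Function.update P i Pi') i) ≤ (P i).1 (ψ P i)

/-- A maximizer of `f` on the nonempty finite set `A`. -/
noncomputable def bestOf (f : Option S → ℕ) (A : Finset (Option S))
    (h : A.Nonempty) : Option S :=
  (Finset.exists_max_image A f h).choose

/-- Serial dictatorship: students pick, in the order given, their most
preferred option among `none` and the schools with remaining capacity. -/
noncomputable def sdRun (P : Prof I S) :
    List I → (S → ℕ) → Matching I S → Matching I S
  | [], _, μ => μ
  | i :: rest, rem, μ =>
    let c := bestOf (P i).1 (insert none ((univ.filter fun s => 0 < rem s).image some))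
      (insert_nonempty _ _)
    sdRun P rest (fun s => if c = some s then rem s - 1 else rem s)
      (Function.update μ i c)

/-- The serial dictatorship outcome with ordering `L` and capacities `q`. -/
noncomputable def SD (P : Prof I S) (q : S → ℕ) (L : List I) : Matching I S :=
  sdRun P L q fun _ => none

/-- Unit capacities. -/
def q13 : Fin 3 → ℕ := fun _ => 1

/-- Students i,j,k,h = 0,1,2,3; schools a,b,c = 0,1,2.
Preferences: i: a,b,∅ ; j: c,a,∅ ; k: c,a,∅ ; h: c,∅. -/
def u13 : Prof (Fin 4) (Fin 3) := fun i =>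
  if i = 0 then ⟨fun o => match o with | none => 1 | some s => ![3, 2, 0] s, by decide⟩
  else if i = 3 then ⟨fun o => match o with | none => 2 | some s => ![1, 0, 3] s, by decide⟩
  else ⟨fun o => match o with | none => 1 | some s => ![2, 0, 3] s, by decide⟩

/-- Priorities: ≻_a: k,i,j,h ; ≻_b: k,h,j,i ; ≻_c: k,h,i,j. -/
def pr13 : Prio (Fin 4) (Fin 3) :=
  ⟨fun s => if s = 0 then ![2, 1, 3, 0] else if s = 1 then ![0, 1, 3, 2]
    else ![1, 0, 3, 2], by decide⟩

/-- The claimed FAM truth-telling outcome: i → b, j → a, k → c, h unassigned. -/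
def mu13 : Matching (Fin 4) (Fin 3) := ![some 1, some 0, some 2, none]

/-- The DA outcome: i → a, k → c, j and h unassigned. -/
def muDA13 : Matching (Fin 4) (Fin 3) := ![some 0, none, some 2, none]

/-!
Every profile admits an FAM outcome: implementing an improving chain or cycle strictly raises
the students' total utility, and each fairness step strictly raises the total priority of the
assigned students, so both stages terminate. The mechanism is then chosen profile by profile:
`mu13` at the truthful profile, and at a unilateral deviation an FAM outcome which the deviator,
by true preferences, does not prefer to `mu13`. Student `k` already holds his top school `c`;
the other deviations are punished, mostly by the fairness stage (if `h` declares `b`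
acceptable, `h` takes `b` from `i` and `i` then takes `a` from `j`; if `i` declares `b`
unacceptable, the EAM stage seats `j` at `c` and `k` at `a`, and `h` then takes `c` from `j`).
Finally, an exhaustive check shows that every stable matching assigns exactly two students.
-/

theorem exists_reflTransGen_of_potential {α : Type*} {r : α → α → Prop} {p : α → Prop}
    (V : α → ℕ) (B : ℕ) (hB : ∀ a, V a ≤ B) (hstep : ∀ a, ¬ p a → ∃ b, r a b ∧ V a < V b)
    (a : α) : ∃ b, Relation.ReflTransGen r a b ∧ p b := by
  induction h : B - V a using Nat.strong_induction_on generalizing a with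
  | _ n ih =>
    by_cases ha : p a
    · exact ⟨a, .refl, ha⟩
    obtain ⟨b, hab, hlt⟩ := hstep a ha
    obtain ⟨c, hbc, hc⟩ := ih (B - V b) (by have := hB b; omega) b rfl
    exact ⟨c, .head hab hbc, hc⟩

namespace SchoolChoice

section XiStep

variable {A : Set (Matching I S)} {μ ν : Matching I S} {i : I}

omit [DecidableEq S] in
theorem xiStep_subset (A : Set (Matching I S)) (i : I) : xiStep A i ⊆ A := by
  unfold xiStep
  split_ifs
  exacts [Set.sep_subset _ _, subset_rfl]

omit [DecidableEq S] in
theorem foldl_xiStep_subset (A : Set (Matching I S)) (L : List I) : L.foldl xiStep A ⊆ A := by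
  induction L generalizing A with
  | nil => exact subset_rfl
  | cons i L ih => exact (ih _).trans (xiStep_subset A i)

omit [DecidableEq S] in
theorem mem_xiStep (hμ : μ ∈ A) (hi : μ i ≠ none) : μ ∈ xiStep A i := by
  rw [xiStep, if_pos ⟨μ, hμ, hi⟩]
  exact ⟨hμ, hi⟩

omit [DecidableEq S] in
theorem xiStep_eq_self (h : ∀ ν ∈ A, ν i = none) : xiStep A i = A := by
  rw [xiStep, if_neg]
  rintro ⟨ν, hν, hi⟩
  exact hi (h ν hν)

omit [DecidableEq S] in
theorem mem_foldl_xiStep {L : List I} (hμ : μ ∈ A)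
    (hL : ∀ i ∈ L, μ i ≠ none ∨ ∀ ν ∈ A, ν i = none) : μ ∈ L.foldl xiStep A := by
  induction L generalizing A with
  | nil => exact hμ
  | cons i L ih =>
    refine ih ?_ fun j hj => (hL j (List.mem_cons_of_mem i hj)).imp_right
      fun h ν hν => h ν (xiStep_subset A i hν)
    rcases hL i List.mem_cons_self with hi | hi
    · exact mem_xiStep hμ hi
    · rwa [xiStep_eq_self hi]

omit [DecidableEq S] in
theorem ne_none_of_mem_foldl_xiStep {L : List I} (hμ : μ ∈ L.foldl xiStep A)
    (hν : ν ∈ L.foldl xiStep A) (hi : i ∈ L) (hμi : μ i ≠ none) : ν i ≠ none := by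
  induction L generalizing A with
  | nil => simp at hi
  | cons j L ih =>
    rcases List.mem_cons.1 hi with rfl | hi
    · have hμA := foldl_xiStep_subset _ L hμ
      have hνA := foldl_xiStep_subset _ L hν
      unfold xiStep at hμA hνA
      split_ifs at hμA hνA with h
      · exact hνA.2
      · exact absurd ⟨μ, hμA, hμi⟩ h
    · exact ih hμ hν hi

theorem xiList_nonempty (P : Prof I S) (q : S → ℕ) (L : List I) :
    (xiList P q L).Nonempty := by
  have hstep : ∀ (A : Set (Matching I S)) i, A.Nonempty → (xiStep A i).Nonempty := by
    intro A i hA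
    unfold xiStep
    split_ifs with h
    · obtain ⟨μ, hμ, hi⟩ := h
      exact ⟨μ, hμ, hi⟩
    · exact hA
  induction L using List.reverseRecOn with
  | nil => exact ⟨fun _ => none, fun s => by simp, fun i => le_rfl⟩
  | append_singleton L i ih =>
    rw [xiList, List.foldl_append]
    exact hstep _ i ih

end XiStep

section EAM

def welfare (P : Prof I S) (μ : Matching I S) : ℕ := ∑ i, (P i).1 (μ i)

omit [DecidableEq I] [DecidableEq S] in
theorem welfare_le_sum_sup (P : Prof I S) (μ : Matching I S) :
    welfare P μ ≤ ∑ i, univ.sup (P i).1 :=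
  sum_le_sum fun i _ => le_sup (mem_univ (μ i))

omit [Fintype S] [DecidableEq S] in
theorem welfare_lt_extend {P : Prof I S} {μ : Matching I S} {n : ℕ} {a : Fin (n + 1) → I}
    (ha : Function.Injective a) (g : Fin (n + 1) → Option S)
    (hg : ∀ k, (P (a k)).1 (μ (a k)) < (P (a k)).1 (g k)) :
    welfare P μ < welfare P (Function.extend a g μ) := by
  refine sum_lt_sum (fun i _ => ?_) ⟨a 0, mem_univ _, by rw [ha.extend_apply]; exact hg 0⟩
  by_cases hi : ∃ k, a k = i
  · obtain ⟨k, rfl⟩ := hi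
    rw [ha.extend_apply]
    exact (hg k).le
  · rw [Function.extend_apply' _ _ _ hi]

omit [Fintype S] in
theorem exists_implementStep {P : Prof I S} {q : S → ℕ} {μ : Matching I S}
    (h : HasImpChain P q μ ∨ HasImpCycle P μ) :
    ∃ μ', ImplementStep P q μ μ' ∧ welfare P μ < welfare P μ' := by
  rcases h with ⟨n, a, t, hchain⟩ | ⟨n, a, t, hcycle⟩
  · refine ⟨Function.extend a (fun k => some (t k)) μ, .inl ⟨n, a, t, hchain,
      fun k => hchain.1.extend_apply _ _ k, fun j hj => Function.extend_apply' _ _ _ ?_⟩,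
      welfare_lt_extend hchain.1 _ hchain.2.1⟩
    rintro ⟨k, rfl⟩
    exact hj k rfl
  · refine ⟨Function.extend a (fun k => some (t (k + 1))) μ, .inr ⟨n, a, t, hcycle,
      fun k => hcycle.1.extend_apply _ _ k, fun j hj => Function.extend_apply' _ _ _ ?_⟩,
      welfare_lt_extend hcycle.1 _ fun k => ?_⟩
    · rintro ⟨k, rfl⟩
      exact hj k rfl
    · rw [hcycle.2.1 k]
      exact hcycle.2.2 k

theorem exists_isEAMOutcome (P : Prof I S) (q : S → ℕ) (L : List I) :
    ∃ μ, IsEAMOutcome P q L μ := by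
  obtain ⟨μ₀, hμ₀⟩ := xiList_nonempty P q L
  obtain ⟨μ, hsteps, hchain, hcycle⟩ :=
    exists_reflTransGen_of_potential (r := ImplementStep P q)
      (p := fun μ => ¬ HasImpChain P q μ ∧ ¬ HasImpCycle P μ) (welfare P) _
      (welfare_le_sum_sup P) (fun μ hμ => exists_implementStep (by tauto)) μ₀
  exact ⟨μ, μ₀, hμ₀, hsteps, hchain, hcycle⟩

end EAM

section Fairness

def priorityScore (pr : Prio I S) (μ : Matching I S) : ℕ :=
  ∑ i, (μ i).elim 0 fun s => pr.1 s i + 1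

omit [Fintype S] [DecidableEq S] in
theorem priorityScore_update (pr : Prio I S) (μ : Matching I S) (i : I) (o : Option S) :
    priorityScore pr (Function.update μ i o) + (μ i).elim 0 (fun s => pr.1 s i + 1) =
      priorityScore pr μ + o.elim 0 (fun s => pr.1 s i + 1) := by
  simp only [priorityScore, ← add_sum_erase _ _ (mem_univ i), Function.update_self]
  have hrest : ∑ x ∈ univ.erase i, (Function.update μ i o x).elim 0 (fun s => pr.1 s x + 1) =
      ∑ x ∈ univ.erase i, (μ x).elim 0 (fun s => pr.1 s x + 1) :=
    sum_congr rfl fun x hx => by rw [Function.update_of_ne (ne_of_mem_erase hx)]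
  rw [hrest]
  ring

omit [Fintype S] in
theorem exists_fairStep {P : Prof I S} {pr : Prio I S} {μ : Matching I S}
    (h : ¬ FairForUnassigned P pr μ) :
    ∃ μ', FairStep P pr μ μ' ∧ priorityScore pr μ < priorityScore pr μ' := by
  obtain ⟨i, s, j₀, hi, hpref, hj₀, hj₀i⟩ := not_not.1 h
  obtain ⟨j, hjs, hjmin⟩ := exists_min_image (univ.filter fun j => μ j = some s)
    (pr.1 s) ⟨j₀, mem_filter.2 ⟨mem_univ _, hj₀⟩⟩
  have hj : μ j = some s := (mem_filter.1 hjs).2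
  have hji : pr.1 s j < pr.1 s i := (hjmin j₀ (mem_filter.2 ⟨mem_univ _, hj₀⟩)).trans_lt hj₀i
  have hij : i ≠ j := by rintro rfl; simp [hi] at hj
  refine ⟨_, ⟨i, s, j, hi, hpref, hj, hji,
    fun j' hj' => hjmin j' (mem_filter.2 ⟨mem_univ _, hj'⟩), rfl⟩, ?_⟩
  have h₁ := priorityScore_update pr μ j none
  have h₂ := priorityScore_update pr (Function.update μ j none) i (some s)
  rw [Function.update_of_ne hij, hi] at h₂
  rw [hj] at h₁
  simp only [Option.elim] at h₁ h₂
  omega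

omit [DecidableEq I] [DecidableEq S] in
theorem priorityScore_le (pr : Prio I S) (μ : Matching I S) :
    priorityScore pr μ ≤ ∑ i, (univ.sup fun s => pr.1 s i + 1) := by
  refine sum_le_sum fun i _ => ?_
  cases μ i with
  | none => exact Nat.zero_le _
  | some s => exact le_sup (f := fun s => pr.1 s i + 1) (mem_univ s)

theorem exists_fairForUnassigned (P : Prof I S) (pr : Prio I S) (μ : Matching I S) :
    ∃ μ', Relation.ReflTransGen (FairStep P pr) μ μ' ∧ FairForUnassigned P pr μ' :=
  exists_reflTransGen_of_potential (priorityScore pr) _ (priorityScore_le pr)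
    (fun _ h => exists_fairStep h) μ

end Fairness

def IsFAMOutcome (P : Prof I S) (q : S → ℕ) (pr : Prio I S) (L : List I) (μ : Matching I S) :
    Prop :=
  ∃ μ₁, IsEAMOutcome P q L μ₁ ∧ Relation.ReflTransGen (FairStep P pr) μ₁ μ ∧
    FairForUnassigned P pr μ

theorem exists_isFAMOutcome (P : Prof I S) (q : S → ℕ) (pr : Prio I S) (L : List I) :
    ∃ μ, IsFAMOutcome P q pr L μ := by
  obtain ⟨μ₁, hμ₁⟩ := exists_isEAMOutcome P q L
  obtain ⟨μ, hsteps, hfair⟩ := exists_fairForUnassigned P pr μ₁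
  exact ⟨μ, μ₁, hμ₁, hsteps, hfair⟩

omit [DecidableEq S] in
theorem exists_mechanism_nashEq {Φ : Prof I S → Matching I S → Prop} {u : Prof I S}
    {μ : Matching I S} (hΦ : ∀ P, ∃ ν, Φ P ν) (hu : Φ u μ)
    (hdev : ∀ i p, ∃ ν, Φ (Function.update u i p) ν ∧ (u i).1 (ν i) ≤ (u i).1 (μ i)) :
    ∃ ψ : Mechanism I S, (∀ P, Φ P (ψ P)) ∧ ψ u = μ ∧ NashEq u ψ u := by
  have hsel : ∀ P, ∃ ν, Φ P ν ∧ (P = u → ν = μ) ∧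
      ∀ i p, P = Function.update u i p → (u i).1 (ν i) ≤ (u i).1 (μ i) := by
    intro P
    by_cases hPu : P = u
    · subst hPu
      exact ⟨μ, hu, fun _ => rfl, fun _ _ _ => le_rfl⟩
    by_cases hPdev : ∃ i p, P = Function.update u i p
    · obtain ⟨i, p, rfl⟩ := hPdev
      obtain ⟨ν, hν, hle⟩ := hdev i p
      refine ⟨ν, hν, fun h => absurd h hPu, fun i' p' h => ?_⟩
      -- a profile differing from `u` determines the deviating student
      obtain rfl : i' = i := by
        by_contra hne
        have hp : p = u i := by simpa [Function.update_of_ne (Ne.symm hne)] using congrFun h i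
        exact hPu (by rw [hp, Function.update_eq_self])
      exact hle
    · obtain ⟨ν, hν⟩ := hΦ P
      exact ⟨ν, hν, fun h => absurd h hPu, fun i p h => absurd ⟨i, p, h⟩ hPdev⟩
  choose ψ hψ using hsel
  refine ⟨ψ, fun P => (hψ P).1, (hψ u).2.1 rfl, fun i p => ?_⟩
  rw [(hψ u).2.1 rfl]
  exact (hψ _).2.2 i p rfl

section Criteria

omit [DecidableEq I] [Fintype S] in
theorem not_hasImpChain_of_forall_le {P : Prof I S} {q : S → ℕ} {μ : Matching I S}
    (h : ∀ s, (univ.filter fun j => μ j = some s).card < q s →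
      ∀ i, (P i).1 (some s) ≤ (P i).1 (μ i)) :
    ¬ HasImpChain P q μ := by
  rintro ⟨n, a, t, -, hpref, -, hlast⟩
  exact (h _ hlast _).not_gt (hpref (Fin.last n))

omit [DecidableEq I] [Fintype S] in
theorem not_hasImpChain_of_full {P : Prof I S} {q : S → ℕ} {μ : Matching I S}
    (h : ∀ s, q s ≤ (univ.filter fun j => μ j = some s).card) :
    ¬ HasImpChain P q μ :=
  not_hasImpChain_of_forall_le fun s hs => absurd (h s) hs.not_ge

omit [Fintype I] [DecidableEq I] [Fintype S] [DecidableEq S] in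
/-- An improving cycle would strictly increase `m` all the way around. -/
theorem not_hasImpCycle_of_potential {P : Prof I S} {μ : Matching I S} (m : I → ℕ)
    (h : ∀ x y s t, μ x = some s → μ y = some t → m y ≤ m x →
      (P x).1 (some t) ≤ (P x).1 (some s)) :
    ¬ HasImpCycle P μ := by
  rintro ⟨n, a, t, -, hass, hpref⟩
  obtain ⟨k, -, hk⟩ := exists_max_image univ (fun k => m (a k)) ⟨0, mem_univ _⟩
  exact (hpref k).not_ge (h _ _ _ _ (hass k) (hass (k + 1)) (hk _ (mem_univ _)))

theorem msize_le_sum_of_feasible {q : S → ℕ} {μ : Matching I S} (hμ : Feasible q μ) :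
    msize μ ≤ ∑ s, q s :=
  calc msize μ ≤ #(univ.biUnion fun s => univ.filter fun i => μ i = some s) := by
        refine card_le_card fun i hi => ?_
        obtain ⟨s, hs⟩ := Option.ne_none_iff_exists'.1 (mem_filter.1 hi).2
        exact mem_biUnion.2 ⟨s, mem_univ _, mem_filter.2 ⟨mem_univ _, hs⟩⟩
    _ ≤ ∑ s, #(univ.filter fun i => μ i = some s) := card_biUnion_le
    _ ≤ ∑ s, q s := sum_le_sum fun s _ => hμ s

end Criteria

section Example

abbrev L13 : List (Fin 4) := [2, 1, 0, 3]

theorem mem_xiList13 {P : Prof (Fin 4) (Fin 3)} {μ : Matching (Fin 4) (Fin 3)}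
    (hμ : Feasible q13 μ) (hIR : IndivRational P μ)
    (h2 : μ 2 ≠ none) (h1 : μ 1 ≠ none) (h0 : μ 0 ≠ none) : μ ∈ xiList P q13 L13 := by
  have hmem : μ ∈ [2, 1, 0].foldl xiStep {μ | Feasible q13 μ ∧ IndivRational P μ} :=
    mem_foldl_xiStep ⟨hμ, hIR⟩ (by simp [h0, h1, h2])
  show μ ∈ xiStep ([2, 1, 0].foldl xiStep _) 3
  -- a fourth assigned student would exceed the three seats
  rw [xiStep_eq_self fun ν hν => ?_]
  · exact hmem
  by_contra h3
  have hall : ∀ i, ν i ≠ none := by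
    intro i
    fin_cases i
    exacts [ne_none_of_mem_foldl_xiStep hmem hν (by simp) h0,
      ne_none_of_mem_foldl_xiStep hmem hν (by simp) h1,
      ne_none_of_mem_foldl_xiStep hmem hν (by simp) h2, h3]
  have h4 : msize ν = 4 := by simp [msize, hall]
  have := msize_le_sum_of_feasible (foldl_xiStep_subset _ _ hν).1
  simp [h4, q13] at this

theorem not_hasImpCycle_mu13 {P : Prof (Fin 4) (Fin 3)}
    (h1 : (P 1).1 (some 1) ≤ (P 1).1 (some 0)) (h2 : P 2 = u13 2) :
    ¬ HasImpCycle P mu13 := by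
  refine not_hasImpCycle_of_potential ![0, 1, 2, 0] fun x y s t hx hy hm => ?_
  fin_cases x <;> fin_cases y <;> simp [mu13] at hx hy hm <;> subst hx hy <;> simp [h2, u13]
  exact h1

theorem isEAMOutcome_mu13 {P : Prof (Fin 4) (Fin 3)} (h0 : (P 0).1 none ≤ (P 0).1 (some 1))
    (h1 : (P 1).1 none ≤ (P 1).1 (some 0)) (h1' : (P 1).1 (some 1) ≤ (P 1).1 (some 0))
    (h2 : P 2 = u13 2) : IsEAMOutcome P q13 L13 mu13 := by
  have hIR : IndivRational P mu13 := by
    intro x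
    fin_cases x
    exacts [h0, h1, by simp [h2, mu13]; decide, le_rfl]
  exact ⟨mu13, mem_xiList13 (by unfold Feasible; decide) hIR (by decide) (by decide) (by decide),
    .refl, not_hasImpChain_of_full (by decide), not_hasImpCycle_mu13 h1' h2⟩

theorem fairForUnassigned_mu13 {P : Prof (Fin 4) (Fin 3)}
    (h3 : (P 3).1 (some 1) ≤ (P 3).1 none) :
    FairForUnassigned P pr13 mu13 := by
  rintro ⟨x, s, y, hx, hxs, hy, hpr⟩
  fin_cases x <;> fin_cases y <;> simp [mu13] at hx hy <;> subst hy <;> simp_all [pr13]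
  exact hxs.not_ge h3

theorem isFAMOutcome_mu13 {P : Prof (Fin 4) (Fin 3)} (h0 : (P 0).1 none ≤ (P 0).1 (some 1))
    (h1 : (P 1).1 none ≤ (P 1).1 (some 0)) (h1' : (P 1).1 (some 1) ≤ (P 1).1 (some 0))
    (h2 : P 2 = u13 2) (h3 : (P 3).1 (some 1) ≤ (P 3).1 none) :
    IsFAMOutcome P q13 pr13 L13 mu13 :=
  ⟨mu13, isEAMOutcome_mu13 h0 h1 h1' h2, .refl, fairForUnassigned_mu13 h3⟩

set_option maxRecDepth 10000 in
theorem eq_none_or_b_of_j_k_assigned : ∀ ν : Matching (Fin 4) (Fin 3), Feasible q13 ν →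
    (∀ x ≠ 0, (u13 x).1 none ≤ (u13 x).1 (ν x)) → ν 1 ≠ none → ν 2 ≠ none →
    (ν 0 = none ∨ ν 0 = some 1) ∧ ν 3 = none := by
  unfold Feasible
  decide

theorem isEAMOutcome_of_i_rejects_b {P : Prof (Fin 4) (Fin 3)}
    (h0 : (P 0).1 (some 1) < (P 0).1 none) (hP : ∀ x ≠ 0, P x = u13 x) :
    IsEAMOutcome P q13 L13 ![none, some 2, some 0, none] := by
  have hmem : ![none, some 2, some 0, none] ∈
      [2, 1].foldl xiStep {μ | Feasible q13 μ ∧ IndivRational P μ} := by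
    refine mem_foldl_xiStep ⟨by unfold Feasible; decide, fun x => ?_⟩ (by simp)
    fin_cases x <;> simp [hP] <;> decide
  have hrest : ∀ ν ∈ [2, 1].foldl xiStep {μ | Feasible q13 μ ∧ IndivRational P μ},
      ν 0 = none ∧ ν 3 = none := by
    intro ν hν
    obtain ⟨hfeas, hIR⟩ := foldl_xiStep_subset _ _ hν
    obtain ⟨hi | hi, hh⟩ := eq_none_or_b_of_j_k_assigned ν hfeas
      (fun x hx => hP x hx ▸ hIR x)
      (ne_none_of_mem_foldl_xiStep hmem hν (by simp) (by simp))
      (ne_none_of_mem_foldl_xiStep hmem hν (by simp) (by simp))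
    · exact ⟨hi, hh⟩
    · have := hIR 0
      rw [hi] at this
      omega
  refine ⟨_, ?_, .refl, not_hasImpChain_of_forall_le fun s hs x => ?_,
    not_hasImpCycle_of_potential ![0, 1, 0, 0] fun x y s t hx hy hm => ?_⟩
  · show _ ∈ xiStep (xiStep ([2, 1].foldl xiStep _) 0) 3
    rwa [xiStep_eq_self fun ν hν => (hrest ν hν).1, xiStep_eq_self fun ν hν => (hrest ν hν).2]
  · obtain rfl : s = 1 := by fin_cases s <;> first | rfl | exact absurd hs (by decide)
    fin_cases x <;> simp [hP] <;> first | exact h0.le | decide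
  · fin_cases x <;> fin_cases y <;> simp at hx hy hm <;> subst hx hy <;> simp [hP, u13]

theorem isFAMOutcome_of_i_rejects_b {P : Prof (Fin 4) (Fin 3)}
    (h0 : (P 0).1 (some 1) < (P 0).1 none) (hP : ∀ x ≠ 0, P x = u13 x) :
    IsFAMOutcome P q13 pr13 L13 ![none, none, some 0, some 2] := by
  refine ⟨_, isEAMOutcome_of_i_rejects_b h0 hP,
    .single ⟨3, 2, 1, rfl, by simp [hP]; decide, rfl, by decide, fun y hy => ?_, by decide⟩, ?_⟩
  · fin_cases y <;> simp_all [pr13]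
  · rintro ⟨x, s, y, hx, -, hy, hpr⟩
    fin_cases x <;> fin_cases y <;> simp at hx hy <;> subst hy <;> simp_all [pr13]

theorem isFAMOutcome_of_h_accepts_b {P : Prof (Fin 4) (Fin 3)}
    (h3 : (P 3).1 none < (P 3).1 (some 1)) (hP : ∀ x ≠ 3, P x = u13 x) :
    IsFAMOutcome P q13 pr13 L13 ![some 0, none, some 2, some 1] := by
  have hEAM : IsEAMOutcome P q13 L13 mu13 :=
    isEAMOutcome_mu13 (by simp [hP, u13]) (by simp [hP, u13]) (by simp [hP, u13])
      (hP 2 (by decide))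
  have hstep₁ : FairStep P pr13 mu13 ![none, some 0, some 2, some 1] :=
    ⟨3, 1, 0, rfl, h3, rfl, by decide, fun y hy => by fin_cases y <;> simp_all [mu13, pr13],
      by decide⟩
  have hstep₂ :
      FairStep P pr13 ![none, some 0, some 2, some 1] ![some 0, none, some 2, some 1] :=
    ⟨0, 0, 1, rfl, by simp [hP, u13], rfl, by decide,
      fun y hy => by fin_cases y <;> simp_all [pr13], by decide⟩
  refine ⟨mu13, hEAM, .head hstep₁ (.single hstep₂), ?_⟩
  rintro ⟨x, s, y, hx, hxs, hy, hpr⟩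
  fin_cases x <;> fin_cases y <;> simp at hx hy <;> subst hy <;> simp_all [pr13, u13]

theorem isFAMOutcome_of_j_accepts_b {P : Prof (Fin 4) (Fin 3)}
    (h1 : (P 1).1 none < (P 1).1 (some 1)) (hP : ∀ x ≠ 1, P x = u13 x) :
    IsFAMOutcome P q13 pr13 L13 ![some 0, some 1, some 2, none] := by
  have hIR : IndivRational P ![some 0, some 1, some 2, none] := by
    intro x
    fin_cases x <;> simp [hP, u13]
    exact h1.le
  refine ⟨_, ⟨_, mem_xiList13 (by unfold Feasible; decide) hIR (by simp) (by simp) (by simp),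
    .refl, not_hasImpChain_of_full (by decide),
    not_hasImpCycle_of_potential ![1, 0, 1, 0] fun x y s t hx hy hm => ?_⟩, .refl, ?_⟩
  · fin_cases x <;> fin_cases y <;> simp at hx hy hm <;> subst hx hy <;> simp [hP, u13]
  · rintro ⟨x, s, y, hx, hxs, hy, hpr⟩
    fin_cases x <;> fin_cases y <;> simp at hx hy <;> subst hy <;> simp_all [pr13, u13]

theorem isEAMOutcome_of_j_rejects_all {P : Prof (Fin 4) (Fin 3)}
    (h1 : ∀ s, (P 1).1 (some s) < (P 1).1 none) (hP : ∀ x ≠ 1, P x = u13 x) :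
    IsEAMOutcome P q13 L13 ![some 1, none, some 0, some 2] := by
  have hIR : IndivRational P ![some 1, none, some 0, some 2] := by
    intro x
    fin_cases x <;> simp [hP, u13]
  refine ⟨_, mem_foldl_xiStep ⟨by unfold Feasible; decide, hIR⟩ ?_, .refl,
    not_hasImpChain_of_full (by decide),
    not_hasImpCycle_of_potential ![0, 0, 1, 2] fun x y s t hx hy hm => ?_⟩
  · simp only [List.mem_cons, List.not_mem_nil, or_false, forall_eq_or_imp, forall_eq]
    refine ⟨by simp, .inr fun ν hν => ?_, by simp, by simp⟩
    by_contra hj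
    obtain ⟨s, hs⟩ := Option.ne_none_iff_exists'.1 hj
    have := hν.2 1
    rw [hs] at this
    exact (h1 s).not_ge this
  · fin_cases x <;> fin_cases y <;> simp at hx hy hm <;> subst hx hy <;> simp [hP, u13]

theorem isEAMOutcome_of_j_accepts_only_c {P : Prof (Fin 4) (Fin 3)}
    (h1a : (P 1).1 (some 0) < (P 1).1 none) (h1b : (P 1).1 (some 1) < (P 1).1 none)
    (h1c : (P 1).1 none < (P 1).1 (some 2)) (hP : ∀ x ≠ 1, P x = u13 x) :
    IsEAMOutcome P q13 L13 ![some 1, some 2, some 0, none] := by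
  have hIR : IndivRational P ![some 1, some 2, some 0, none] := by
    intro x
    fin_cases x <;> simp [hP, u13]
    exact h1c.le
  refine ⟨_, mem_xiList13 (by unfold Feasible; decide) hIR (by simp) (by simp) (by simp),
    .refl, not_hasImpChain_of_full (by decide),
    not_hasImpCycle_of_potential ![0, 2, 1, 0] fun x y s t hx hy hm => ?_⟩
  fin_cases x <;> fin_cases y <;> simp at hx hy hm <;> subst hx hy <;> simp [hP, u13] <;> omega

theorem isFAMOutcome_of_j_rejects_a_b {P : Prof (Fin 4) (Fin 3)}
    (h1a : (P 1).1 (some 0) < (P 1).1 none) (h1b : (P 1).1 (some 1) < (P 1).1 none)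
    (hP : ∀ x ≠ 1, P x = u13 x) :
    IsFAMOutcome P q13 pr13 L13 ![some 1, none, some 0, some 2] := by
  have hfair : FairForUnassigned P pr13 ![some 1, none, some 0, some 2] := by
    rintro ⟨x, s, y, hx, hxs, hy, hpr⟩
    fin_cases x <;> fin_cases y <;> simp at hx hy <;> subst hy <;> simp_all [pr13]
    omega
  rcases lt_or_gt_of_ne ((P 1).2.ne (Option.some_ne_none 2)) with h1c | h1c
  · refine ⟨_, isEAMOutcome_of_j_rejects_all (fun s => ?_) hP, .refl, hfair⟩
    fin_cases s <;> assumption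
  · refine ⟨_, isEAMOutcome_of_j_accepts_only_c h1a h1b h1c hP, .single ⟨3, 2, 1, rfl,
      by simp [hP, u13], rfl, by decide, fun y hy => ?_, by decide⟩, hfair⟩
    fin_cases y <;> simp_all [pr13]

theorem exists_isFAMOutcome_update_i (p : IndPref (Fin 3)) :
    ∃ ν, IsFAMOutcome (Function.update u13 0 p) q13 pr13 L13 ν ∧
      (u13 0).1 (ν 0) ≤ (u13 0).1 (mu13 0) := by
  rcases lt_or_gt_of_ne (p.2.ne (Option.some_ne_none 1)) with hb | hb
  · exact ⟨_, isFAMOutcome_of_i_rejects_b (by simpa using hb)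
      (fun x hx => Function.update_of_ne hx _ _), by decide⟩
  · refine ⟨mu13, isFAMOutcome_mu13 (by simpa using hb.le) ?_ ?_ (by simp) ?_, le_rfl⟩
    all_goals simp [u13]

theorem exists_isFAMOutcome_update_j (p : IndPref (Fin 3)) :
    ∃ ν, IsFAMOutcome (Function.update u13 1 p) q13 pr13 L13 ν ∧
      (u13 1).1 (ν 1) ≤ (u13 1).1 (mu13 1) := by
  have hP (x) (hx : x ≠ 1) : Function.update u13 1 p x = u13 x := Function.update_of_ne hx _ _
  rcases lt_or_gt_of_ne (p.2.ne (Option.some_ne_none 1)) with hb | hb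
  · rcases lt_or_gt_of_ne (p.2.ne (Option.some_ne_none 0)) with ha | ha
    · exact ⟨_, isFAMOutcome_of_j_rejects_a_b (by simpa using ha) (by simpa using hb) hP,
        by decide⟩
    · refine ⟨mu13, isFAMOutcome_mu13 (by simp [u13]) (by simpa using ha.le)
        (by simpa using (hb.trans ha).le) (by simp) (by simp [u13]), le_rfl⟩
  · exact ⟨_, isFAMOutcome_of_j_accepts_b (by simpa using hb) hP, by decide⟩

theorem exists_isFAMOutcome_update_k (p : IndPref (Fin 3)) :
    ∃ ν, IsFAMOutcome (Function.update u13 2 p) q13 pr13 L13 ν ∧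
      (u13 2).1 (ν 2) ≤ (u13 2).1 (mu13 2) := by
  have htop : ∀ o, (u13 2).1 o ≤ (u13 2).1 (mu13 2) := by decide
  obtain ⟨ν, hν⟩ := exists_isFAMOutcome (Function.update u13 2 p) q13 pr13 L13
  exact ⟨ν, hν, htop _⟩

theorem exists_isFAMOutcome_update_h (p : IndPref (Fin 3)) :
    ∃ ν, IsFAMOutcome (Function.update u13 3 p) q13 pr13 L13 ν ∧
      (u13 3).1 (ν 3) ≤ (u13 3).1 (mu13 3) := by
  rcases lt_or_gt_of_ne (p.2.ne (Option.some_ne_none 1)) with hb | hb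
  · refine ⟨mu13, isFAMOutcome_mu13 ?_ ?_ ?_ (by simp) (by simpa using hb.le), le_rfl⟩
    all_goals simp [u13]
  · exact ⟨_, isFAMOutcome_of_h_accepts_b (by simpa using hb)
      (fun x hx => Function.update_of_ne hx _ _), by decide⟩

theorem exists_isFAMOutcome_update (i : Fin 4) (p : IndPref (Fin 3)) :
    ∃ ν, IsFAMOutcome (Function.update u13 i p) q13 pr13 L13 ν ∧
      (u13 i).1 (ν i) ≤ (u13 i).1 (mu13 i) := by
  fin_cases i
  exacts [exists_isFAMOutcome_update_i p, exists_isFAMOutcome_update_j p,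
    exists_isFAMOutcome_update_k p, exists_isFAMOutcome_update_h p]

set_option maxRecDepth 100000 in
theorem msize_eq_two_of_stable : ∀ μ, Stable u13 pr13 q13 μ → msize μ = 2 := by
  unfold Stable Feasible IndivRational NonWasteful Fair msize
  decide

set_option maxRecDepth 10000 in
theorem stable_muDA13 : Stable u13 pr13 q13 muDA13 := by
  unfold Stable Feasible IndivRational NonWasteful Fair
  decide

end Example

end SchoolChoice

/-- there are a FAM mechanism ψ (with EAM ordering k,j,i,h), a
profile, and a Nash equilibrium of ψ (namely truth-telling) whose outcome
assigns strictly more students than every stable matching. -/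
theorem FAM_beats_stable_in_equilibrium :
    ∃ ψ : Mechanism (Fin 4) (Fin 3), IsFAMMech q13 pr13 [2, 1, 0, 3] ψ ∧
      ψ u13 = mu13 ∧ NashEq u13 ψ u13 ∧ msize mu13 = 3 ∧
      Stable u13 pr13 q13 muDA13 ∧ msize muDA13 = 2 ∧
      (∀ μ, Stable u13 pr13 q13 μ → msize μ = 2) ∧
      ∀ μ, Stable u13 pr13 q13 μ → msize μ < msize (ψ u13) := by
  obtain ⟨ψ, hψ, hψu, hnash⟩ := SchoolChoice.exists_mechanism_nashEq
    (fun P => SchoolChoice.exists_isFAMOutcome P q13 pr13 [2, 1, 0, 3])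
    (SchoolChoice.isFAMOutcome_mu13 (by decide) (by decide) (by decide) rfl (by decide))
    SchoolChoice.exists_isFAMOutcome_update
  have hsize : msize mu13 = 3 := by decide
  refine ⟨ψ, hψ, hψu, hnash, hsize, SchoolChoice.stable_muDA13, by decide,
    SchoolChoice.msize_eq_two_of_stable, fun μ hμ => ?_⟩
  rw [SchoolChoice.msize_eq_two_of_stable μ hμ, hψu, hsize]
  decide
end

section
/- Under any maximal mechanism ψ, profitable unilateral misreports never increase the number of assigned students: for any problem P and student i with false report P'_i such that ψ_i(P'_i, P_{-i}) P_i ψ_i(P), we have |ψ(P)| ≥ |ψ(P'_i, P_{-i})|. -/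
open Finset
open scoped Classical

variable {I S : Type*} [Fintype I] [DecidableEq I] [Fintype S] [DecidableEq S]

variable {I S : Type*} [Fintype I] [DecidableEq I] [Fintype S] [DecidableEq S]

omit [Fintype I] [Fintype S] [DecidableEq S] in
theorem IndivRational.of_update {P : Prof I S} {i : I} {Pi' : IndPref S} {μ : Matching I S}
    (hμ : IndivRational (Function.update P i Pi') μ) (hi : (P i).1 none ≤ (P i).1 (μ i)) :
    IndivRational P μ := by
  intro j
  rcases eq_or_ne j i with rfl | hj
  · exact hi
  · simpa only [Function.update_of_ne hj] using hμ j

/-- under a maximal mechanism, a profitable unilateral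
misreport never increases the number of assigned students. -/
theorem profitable_misreport_not_larger
    (q : S → ℕ) (ψ : Mechanism I S) (hψ : MaximalMech q ψ)
    (P : Prof I S) (i : I) (Pi' : IndPref S)
    (hgain : (P i).1 (ψ P i) < (P i).1 (ψ (Function.update P i Pi') i)) :
    msize (ψ (Function.update P i Pi')) ≤ msize (ψ P) := by
  obtain ⟨hIR, hmax⟩ := hψ
  obtain ⟨hfeas', hIR'⟩ := hIR (Function.update P i Pi')
  have hacceptable : (P i).1 none ≤ (P i).1 (ψ (Function.update P i Pi') i) :=
    ((hIR P).2 i).trans hgain.le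
  exact hmax P _ hfeas' (hIR'.of_update hacceptable)
end

section
/- There exist a maximal mechanism ψ, a problem P̃, and a student i with false report P̄_i such that i strictly gains by the misreport (ψ_i(P̄_i, P̃_{-i}) P̃_i ψ_i(P̃)) and strictly fewer students are assigned under the misreport: |ψ(P̃)| > |ψ(P̄_i, P̃_{-i})|. Concretely: students include i and j, schools a and b each with capacity 1; true preferences P̃_i: a,b,∅ and P̃_j: a,∅ (all others find everything unacceptable). Any maximal mechanism at P̃ must assign both i and j (i→b, j→a), but if ψ at (P̄_i, P̃_{-i}) with P̄_i: a,∅ assigns a to i, then i gains by reporting P̄_i while only one student is assigned. -/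
open Finset
open scoped Classical

variable {I S : Type*} [Fintype I] [DecidableEq I] [Fintype S] [DecidableEq S]

/-- Unit capacities. -/
def q15 : Fin 2 → ℕ := fun _ => 1

/-- True preferences: student i (= 0): a,b,∅ ; student j (= 1): a,∅
(schools a,b = 0,1). -/
def Pt : Prof (Fin 2) (Fin 2) := fun i =>
  if i = 0 then
    ⟨fun o => match o with | none => 0 | some s => if s = 0 then 2 else 1,
      by decide⟩
  else
    ⟨fun o => match o with | none => 1 | some s => if s = 0 then 2 else 0,
      by decide⟩

/-- Student i's misreport: a,∅ (b unacceptable). -/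
def Pbar : IndPref (Fin 2) :=
  ⟨fun o => match o with | none => 1 | some s => if s = 0 then 2 else 0,
    by decide⟩

/-- Under the truth the unique maximal matching: i → b, j → a. -/
def muBoth : Matching (Fin 2) (Fin 2) := ![some 1, some 0]

/-! At the true profile the only way to assign both students is `i → b`, `j → a`. Once `i`
truncates to `a, ∅`, both students find only `a` acceptable, so every individually rational
matching assigns at most one student, and `i` alone at `a` is maximal. Redefining an arbitrary
maximal mechanism at these two profiles keeps it maximal. -/

open Function

section MaximalMech

variable {ι σ : Type*} [Fintype ι]

theorem msize_le_card (μ : Matching ι σ) : msize μ ≤ Fintype.card ι :=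
  card_filter_le _ _

variable [DecidableEq σ]

def MaxOutcome (P : Prof ι σ) (q : σ → ℕ) (μ : Matching ι σ) : Prop :=
  Feasible q μ ∧ IndivRational P μ ∧ MaximalMatching P q μ

theorem maximalMech_iff {q : σ → ℕ} {ψ : Mechanism ι σ} :
    MaximalMech q ψ ↔ ∀ P, MaxOutcome P q (ψ P) :=
  ⟨fun h P => ⟨(h.1 P).1, (h.1 P).2, h.2 P⟩,
    fun h => ⟨fun P => ⟨(h P).1, (h P).2.1⟩, fun P => (h P).2.2⟩⟩

theorem maximalMatching_of_msize_eq_card {P : Prof ι σ} {q : σ → ℕ} {μ : Matching ι σ}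
    (h : msize μ = Fintype.card ι) :
    MaximalMatching P q μ :=
  fun μ' _ _ => h ▸ msize_le_card μ'

theorem msize_le_of_assigned_eq_some {q : σ → ℕ} {μ : Matching ι σ} {s : σ}
    (hf : Feasible q μ) (h : ∀ i, μ i ≠ none → μ i = some s) : msize μ ≤ q s :=
  calc msize μ ≤ (univ.filter fun i => μ i = some s).card :=
        card_le_card fun i hi => by
          simp only [mem_filter, mem_univ, true_and] at hi ⊢
          exact h i hi
    _ ≤ q s := hf s

theorem exists_maxOutcome [DecidableEq ι] [Fintype σ] (P : Prof ι σ) (q : σ → ℕ) :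
    ∃ μ : Matching ι σ, MaxOutcome P q μ := by
  obtain ⟨μ, hμ, hmax⟩ := exists_max_image
    (univ.filter fun μ : Matching ι σ => Feasible q μ ∧ IndivRational P μ) msize
    ⟨fun _ => none, mem_filter.2 ⟨mem_univ _, fun s => by simp, fun i => le_rfl⟩⟩
  simp only [mem_filter, mem_univ, true_and] at hμ
  exact ⟨μ, hμ.1, hμ.2, fun μ' hf hir => hmax μ' (by simp [hf, hir])⟩

theorem exists_maximalMech [DecidableEq ι] [Fintype σ] (q : σ → ℕ) :
    ∃ ψ : Mechanism ι σ, MaximalMech q ψ := by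
  choose ψ hψ using fun P : Prof ι σ => exists_maxOutcome P q
  exact ⟨ψ, maximalMech_iff.2 hψ⟩

theorem MaximalMech.update [DecidableEq (Prof ι σ)] {P : Prof ι σ} {q : σ → ℕ}
    {ψ : Mechanism ι σ} {μ : Matching ι σ}
    (hψ : MaximalMech q ψ) (hμ : MaxOutcome P q μ) : MaximalMech q (update ψ P μ) := by
  rw [maximalMech_iff] at hψ ⊢
  intro P'
  rcases eq_or_ne P' P with rfl | hne
  · simpa using hμ
  · simpa [update_of_ne hne] using hψ P'

end MaximalMech

def muSingle : Matching (Fin 2) (Fin 2) := ![some 0, none]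

theorem Pt_ne_update : Pt ≠ update Pt 0 Pbar := fun h => by
  have := congrArg (fun P => (P 0).1 (some 1)) h
  simp [Pt, Pbar] at this

theorem maxOutcome_muBoth : MaxOutcome Pt q15 muBoth :=
  ⟨by unfold Feasible; decide, by unfold IndivRational; decide,
    maximalMatching_of_msize_eq_card (by decide)⟩

theorem eq_some_zero_of_acceptable_update :
    ∀ i (o : Option (Fin 2)), (update Pt 0 Pbar i).1 none ≤ (update Pt 0 Pbar i).1 o →
      o ≠ none → o = some 0 := by
  decide

theorem maxOutcome_muSingle : MaxOutcome (update Pt 0 Pbar) q15 muSingle :=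
  ⟨by unfold Feasible; decide, by unfold IndivRational; decide, fun μ hf hir =>
    (msize_le_of_assigned_eq_some hf fun i => eq_some_zero_of_acceptable_update i _ (hir i)).trans
      (by decide)⟩

/-- there is a maximal mechanism under which some student
strictly gains by misreporting while strictly fewer students get assigned. -/
theorem maximal_mechanism_manipulable_size_drop :
    ∃ ψ : Mechanism (Fin 2) (Fin 2), MaximalMech q15 ψ ∧
      ψ Pt = muBoth ∧ ψ (Function.update Pt 0 Pbar) 0 = some 0 ∧
      (Pt 0).1 (ψ Pt 0) < (Pt 0).1 (ψ (Function.update Pt 0 Pbar) 0) ∧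
      msize (ψ (Function.update Pt 0 Pbar)) < msize (ψ Pt) := by
  obtain ⟨ψ₀, hψ₀⟩ := exists_maximalMech (ι := Fin 2) q15
  obtain ⟨ψ, hψ, htruth, hlie⟩ : ∃ ψ : Mechanism (Fin 2) (Fin 2), MaximalMech q15 ψ ∧
      ψ Pt = muBoth ∧ ψ (update Pt 0 Pbar) = muSingle :=
    ⟨update (update ψ₀ Pt muBoth) (update Pt 0 Pbar) muSingle,
      (hψ₀.update maxOutcome_muBoth).update maxOutcome_muSingle,
      by rw [update_of_ne Pt_ne_update, update_self], update_self _ _ _⟩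
  refine ⟨ψ, hψ, htruth, ?_⟩
  rw [htruth, hlie]
  exact ⟨rfl, by decide, by decide⟩
end
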